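/- The three-qubit Mølmer–Sørensen gate U_{Y²}(π/2) := exp(−i(π/8)(Y⊗I₂⊗I₂ + I₂⊗Y⊗I₂ + I₂⊗I₂⊗Y)²), an 8×8 unitary on ℂ^2 ⊗ ℂ^4 (control qubit first), factors as U_{Y²}(π/2) = (Z ⊗ U''_Y)(Z ⊗ Π'₋ + X ⊗ Π'₊), where Π'_± = (I₄ ± Y⊗Y)/2 are the orthogonal projectors onto the ±1 eigenspaces of Y⊗Y on the two system qubits, and U''_Y = (1/2) e^{−iπ/8} · M_Y with M_Y the 4×4 matrix whose rows (in the computational basis) are (1,1,1,1), (−1,1,−1,1), (−1,−1,1,1), (1,−1,−1,1). -/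

import Mathlib

/-!
With `G = Y₁Y₂ + Y₁Y₃ + Y₂Y₃`, the relation `Y² = 1` gives `S_y² = 3 + 2G` and `G² = 3 + 2G`,
so `P = (1 + G)/4` is idempotent and `S_y² = 1 + 8P`. Hence
`exp(-iπ/8 · S_y²) = e^{-iπ/8} (1 + (e^{-iπ} - 1) P) = e^{-iπ/8} (1 - G)/2`.
On the other side `Z² = 1` and `ZX = iY`, while `M_Y` acts as `2` on the range of `Π'₋` and as
`i(Y ⊗ 1 + 1 ⊗ Y)` on the range of `Π'₊`, which produces the same matrix.
-/

open Matrix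
open Kronecker

/-- Pauli matrices. -/
def PX : Matrix (Fin 2) (Fin 2) ℂ := !![0, 1; 1, 0]
def PY : Matrix (Fin 2) (Fin 2) ℂ := !![0, -Complex.I; Complex.I, 0]
def PZ : Matrix (Fin 2) (Fin 2) ℂ := !![1, 0; 0, -1]

/-- The collective spin operator `S_y = Y₁ + Y₂ + Y₃` on three qubits
(control qubit first). -/
def Sy3 : Matrix (Fin 2 × (Fin 2 × Fin 2)) (Fin 2 × (Fin 2 × Fin 2)) ℂ :=
  PY ⊗ₖ ((1 : Matrix (Fin 2) (Fin 2) ℂ) ⊗ₖ (1 : Matrix (Fin 2) (Fin 2) ℂ))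
    + (1 : Matrix (Fin 2) (Fin 2) ℂ) ⊗ₖ (PY ⊗ₖ (1 : Matrix (Fin 2) (Fin 2) ℂ))
    + (1 : Matrix (Fin 2) (Fin 2) ℂ) ⊗ₖ ((1 : Matrix (Fin 2) (Fin 2) ℂ) ⊗ₖ PY)

/-- The three-qubit Mølmer–Sørensen gate `U_{Y²}(π/2) = exp(−i(π/8) S_y²)`. -/
noncomputable def UY2 : Matrix (Fin 2 × (Fin 2 × Fin 2)) (Fin 2 × (Fin 2 × Fin 2)) ℂ :=
  NormedSpace.exp ((-(Complex.I) * (Real.pi / 8)) • (Sy3 * Sy3))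

/-- The projectors onto the `±1` eigenspaces of `Y⊗Y` on the two system qubits. -/
noncomputable def ProjYp : Matrix (Fin 2 × Fin 2) (Fin 2 × Fin 2) ℂ :=
  ((2 : ℂ)⁻¹) • ((1 : Matrix (Fin 2 × Fin 2) (Fin 2 × Fin 2) ℂ) + PY ⊗ₖ PY)

noncomputable def ProjYm : Matrix (Fin 2 × Fin 2) (Fin 2 × Fin 2) ℂ :=
  ((2 : ℂ)⁻¹) • ((1 : Matrix (Fin 2 × Fin 2) (Fin 2 × Fin 2) ℂ) - PY ⊗ₖ PY)

/-- The 4×4 matrix `M_Y` with rows (in the computational basis `|00⟩,|01⟩,|10⟩,|11⟩`)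
`(1,1,1,1)`, `(−1,1,−1,1)`, `(−1,−1,1,1)`, `(1,−1,−1,1)`. -/
def MY : Matrix (Fin 2 × Fin 2) (Fin 2 × Fin 2) ℂ :=
  Matrix.of fun p q =>
    !![1, 1, 1, 1; -1, 1, -1, 1; -1, -1, 1, 1; 1, -1, -1, 1]
      (finProdFinEquiv p) (finProdFinEquiv q)

/-- The residual unitary `U''_Y = (1/2) e^{−iπ/8} M_Y`. -/
noncomputable def UY'' : Matrix (Fin 2 × Fin 2) (Fin 2 × Fin 2) ℂ :=
  ((2 : ℂ)⁻¹ * Complex.exp (-(Complex.I) * (Real.pi / 8))) • MY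

open NormedSpace

theorem IsIdempotentElem.exp_smul {𝕂 𝔸 : Type*} [RCLike 𝕂] [NormedRing 𝔸] [NormedAlgebra 𝕂 𝔸]
    [CompleteSpace 𝔸] {P : 𝔸} (hP : IsIdempotentElem P) (a : 𝕂) :
    exp (a • P) = exp a • P + (1 - P) := by
  have hterm : ∀ n : ℕ, (n.factorial⁻¹ : 𝕂) • (a • P) ^ n
      = ((n.factorial⁻¹ : 𝕂) • a ^ n) • P + if n = 0 then 1 - P else 0 := by
    rintro (_ | n)
    · simp
    · simp [smul_pow, hP.pow_eq n.succ_ne_zero, smul_smul]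
  have hsum := ((exp_series_hasSum_exp' (𝕂 := 𝕂) a).smul_const P).add (hasSum_ite_eq 0 (1 - P))
  simp only [← hterm] at hsum
  exact (exp_series_hasSum_exp' (a • P)).unique hsum

theorem exp_smul_one_add {𝕂 𝔸 : Type*} [RCLike 𝕂] [NormedRing 𝔸] [NormedAlgebra 𝕂 𝔸]
    [CompleteSpace 𝔸] (c : 𝕂) (x : 𝔸) : exp (c • 1 + x) = exp c • exp x := by
  have hball : ∀ y : 𝔸, y ∈ Metric.eball 0 (expSeries 𝕂 𝔸).radius := by
    simp [expSeries_radius_eq_top]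
  rw [exp_add_of_commute_of_mem_ball ((Commute.one_left x).smul_left c) (hball _) (hball _),
    ← Algebra.algebraMap_eq_smul_one, ← algebraMap_exp_comm, Algebra.smul_def]

theorem isIdempotentElem_inv_four_smul_one_add {K A : Type*} [Field K] [CharZero K] [Ring A]
    [Algebra K A] {G : A} (hG : G * G = (3 : K) • 1 + (2 : K) • G) :
    IsIdempotentElem ((4 : K)⁻¹ • (1 + G)) := by
  unfold IsIdempotentElem
  simp only [smul_mul_smul, add_mul, mul_add, one_mul, mul_one, hG]
  module

theorem Matrix.kronecker_sub {α l m n p : Type*} [Ring α] (A : Matrix l m α)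
    (B₁ B₂ : Matrix n p α) : A ⊗ₖ (B₁ - B₂) = A ⊗ₖ B₁ - A ⊗ₖ B₂ := by
  ext; simp [mul_sub]

section ThreeSites

variable {R n : Type*} [CommSemiring R] [Fintype n] [DecidableEq n]

def siteSum (A : Matrix n n R) : Matrix (n × (n × n)) (n × (n × n)) R :=
  A ⊗ₖ (1 ⊗ₖ 1) + 1 ⊗ₖ (A ⊗ₖ 1) + 1 ⊗ₖ (1 ⊗ₖ A)

def pairSum (A : Matrix n n R) : Matrix (n × (n × n)) (n × (n × n)) R :=
  A ⊗ₖ (A ⊗ₖ 1) + A ⊗ₖ (1 ⊗ₖ A) + 1 ⊗ₖ (A ⊗ₖ A)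

variable {A : Matrix n n R}

theorem siteSum_mul_self (hA : A * A = 1) :
    siteSum A * siteSum A = (3 : R) • 1 + (2 : R) • pairSum A := by
  simp only [siteSum, pairSum, add_mul, mul_add, ← mul_kronecker_mul, hA, one_mul, mul_one,
    one_kronecker_one]
  module

theorem pairSum_mul_self (hA : A * A = 1) :
    pairSum A * pairSum A = (3 : R) • 1 + (2 : R) • pairSum A := by
  simp only [pairSum, add_mul, mul_add, ← mul_kronecker_mul, hA, one_mul, mul_one,
    one_kronecker_one]
  module

end ThreeSites

theorem PY_mul_self : PY * PY = 1 := by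
  ext i j
  fin_cases i <;> fin_cases j <;> simp [PY, mul_apply, Complex.I_mul_I]

theorem PZ_mul_self : PZ * PZ = 1 := by
  ext i j
  fin_cases i <;> fin_cases j <;> simp [PZ, mul_apply]

theorem PZ_mul_PX : PZ * PX = Complex.I • PY := by
  ext i j
  fin_cases i <;> fin_cases j <;> simp [PZ, PX, PY, mul_apply]

theorem Sy3_eq_siteSum : Sy3 = siteSum PY := rfl

theorem MY_mul_ProjYm : MY * ProjYm = (2 : ℂ) • ProjYm := by
  ext ⟨a, b⟩ ⟨c, d⟩
  fin_cases a <;> fin_cases b <;> fin_cases c <;> fin_cases d <;>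
    simp [MY, ProjYm, PY, mul_apply, Fintype.sum_prod_type, finProdFinEquiv,
      one_apply] <;> ring

theorem MY_mul_ProjYp : MY * ProjYp = Complex.I • (PY ⊗ₖ 1 + 1 ⊗ₖ PY) := by
  ext ⟨a, b⟩ ⟨c, d⟩
  fin_cases a <;> fin_cases b <;> fin_cases c <;> fin_cases d <;>
    simp [MY, ProjYp, PY, mul_apply, Fintype.sum_prod_type, finProdFinEquiv,
      one_apply] <;> ring

section

-- `exp` on matrices does not depend on the norm; any submultiplicative one gives a Banach algebra.
attribute [local instance] Matrix.linftyOpNormedRing Matrix.linftyOpNormedAlgebra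

theorem UY2_eq_smul_one_sub_pairSum :
    UY2 = (2⁻¹ * Complex.exp (-(Complex.I) * (Real.pi / 8))) • (1 - pairSum PY) := by
  set c : ℂ := -(Complex.I) * (Real.pi / 8)
  set P := (4 : ℂ)⁻¹ • (1 + pairSum PY)
  have hP : IsIdempotentElem P :=
    isIdempotentElem_inv_four_smul_one_add (pairSum_mul_self PY_mul_self)
  have hexponent : c • (Sy3 * Sy3) = c • 1 + (8 * c) • P := by
    rw [Sy3_eq_siteSum, siteSum_mul_self PY_mul_self]
    module
  rw [UY2, hexponent]
  refine (exp_smul_one_add c ((8 * c) • P)).trans ?_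
  have hexp : Complex.exp (8 * c) = -1 := by
    rw [show 8 * c = -(Real.pi * Complex.I) by ring, Complex.exp_neg, Complex.exp_pi_mul_I]
    norm_num
  rw [hP.exp_smul, ← Complex.exp_eq_exp_ℂ, hexp]
  module

end

theorem residual_mul_conditional_eq_smul_one_sub_pairSum :
    (PZ ⊗ₖ UY'') * (PZ ⊗ₖ ProjYm + PX ⊗ₖ ProjYp) =
      (2⁻¹ * Complex.exp (-(Complex.I) * (Real.pi / 8))) • (1 - pairSum PY) := by
  rw [UY'', kronecker_smul, smul_mul_assoc, mul_add, ← mul_kronecker_mul, ← mul_kronecker_mul,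
    PZ_mul_self, PZ_mul_PX, MY_mul_ProjYm, MY_mul_ProjYp, smul_kronecker,
    kronecker_smul Complex.I, smul_smul, Complex.I_mul_I, ProjYm]
  simp only [pairSum, kronecker_smul, kronecker_add, kronecker_sub]
  rw [one_kronecker_one]
  module

/-- Decomposition of the Mølmer–Sørensen gate `U_{Y²}(π/2)` into a residual local
unitary `Z ⊗ U''_Y` and the conditional gate `Z ⊗ Π'₋ + X ⊗ Π'₊`. -/
theorem MS_gate_Y_decomposition :
    UY2 = (PZ ⊗ₖ UY'') * (PZ ⊗ₖ ProjYm + PX ⊗ₖ ProjYp) := by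
  rw [UY2_eq_smul_one_sub_pairSum, residual_mul_conditional_eq_smul_one_sub_pairSum]
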